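/- arXiv:2201.05153 — 2 statements merged into one kernel-verified Lean document; each statement's English description precedes it below -/
import Mathlib

section
/- Suppose (Z̃_e)_{e∈E} is a finite family of pairwise-commuting involutive operators (separators) and (X̄_e)_{e∈E} a family of involutive operators (potential flippers) such that X̄_e Z̃_{e'} = (-1)^{δ_{e,e'}} Z̃_{e'} X̄_e for all e, e'. Then there exists a family (X̃_e)_{e∈E} of operators, each of the form X̄_e times a product of some Z̃_{e''}'s, such that X̃_e X̃_{e'} = X̃_{e'} X̃_e for all e, e', and X̃_e Z̃_{e'} = (-1)^{δ_{e,e'}} Z̃_{e'} X̃_e. -/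
/-!
Order `E` linearly and multiply each `X̄_e` by the product of the separators `Z̃_f` with `f < e`
and `X̄_f` anticommuting with `X̄_e`. Since `X̄_e` anticommutes with `Z̃_e` alone among the
separators, this keeps the relations with the `Z̃`'s, and for `e < f` the single sign picked up
by moving `X̄_e` past the correction of `X̄_f` cancels the sign between `X̄_e` and `X̄_f`.
-/

section SignedCommutation

variable {ι A : Type*} [Ring A]

theorem mul_list_prod_map_eq_zsmul (x : A) (Z : ι → A) (ε : ι → ℤ) {l : List ι}
    (h : ∀ i ∈ l, x * Z i = ε i • (Z i * x)) :
    x * (l.map Z).prod = (l.map ε).prod • ((l.map Z).prod * x) := by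
  induction l with
  | nil => simp
  | cons i l ih =>
    have hl : x * (l.map Z).prod = (l.map ε).prod • ((l.map Z).prod * x) :=
      ih fun j hj => h j (List.mem_cons_of_mem i hj)
    calc x * (Z i * (l.map Z).prod) = (x * Z i) * (l.map Z).prod := (mul_assoc ..).symm
      _ = ε i • Z i * ((l.map ε).prod • ((l.map Z).prod * x)) := by
        rw [h i List.mem_cons_self, smul_mul_assoc, mul_assoc, hl, smul_mul_assoc]
      _ = (ε i * (l.map ε).prod) • (Z i * (l.map Z).prod * x) := by
        rw [smul_mul_assoc, mul_smul_comm, smul_smul, mul_assoc]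

theorem prod_map_ite_neg_one_of_nodup [DecidableEq ι] {l : List ι} (hl : l.Nodup) (f : ι) :
    (l.map fun i => if i = f then (-1 : ℤ) else 1).prod = if f ∈ l then -1 else 1 := by
  rw [List.prod_map_eq_pow_single f _ fun i hi _ => if_neg hi, if_pos rfl]
  split_ifs with hf
  · rw [List.count_eq_one_of_mem hl hf, pow_one]
  · rw [List.count_eq_zero.mpr hf, pow_zero]

theorem mul_list_prod_map_of_nodup [DecidableEq ι] (x : A) (Z : ι → A) (f : ι) {l : List ι}
    (hl : l.Nodup) (h : ∀ i, x * Z i = (if i = f then -1 else 1 : ℤ) • (Z i * x)) :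
    x * (l.map Z).prod = (if f ∈ l then -1 else 1 : ℤ) • ((l.map Z).prod * x) := by
  rw [mul_list_prod_map_eq_zsmul x Z _ fun i _ => h i, prod_map_ite_neg_one_of_nodup hl]

theorem mul_mul_eq_zsmul_of_commute {x p z : A} {s : ℤ} (hxz : x * z = s • (z * x))
    (hpz : Commute p z) : x * p * z = s • (z * (x * p)) := by
  rw [mul_assoc, hpz.eq, ← mul_assoc, hxz, smul_mul_assoc, mul_assoc]

theorem commute_mul_mul_of_zsmul {x y p q : A} {s : ℤ} (hs : s * s = 1)
    (hxy : x * y = s • (y * x)) (hxq : x * q = s • (q * x)) (hpy : Commute p y)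
    (hpq : Commute p q) : Commute (x * p) (y * q) :=
  calc x * p * (y * q) = x * y * (p * q) := by
        rw [mul_assoc, ← mul_assoc p, hpy.eq, mul_assoc, mul_assoc]
    _ = s • (y * (x * q) * p) := by
        rw [hxy, hpq.eq, smul_mul_assoc, mul_assoc, ← mul_assoc x, mul_assoc y]
    _ = y * q * (x * p) := by
        rw [hxq, mul_smul_comm, smul_mul_assoc, smul_smul, hs, one_smul,
          mul_assoc y, mul_assoc, ← mul_assoc y]

end SignedCommutation

section Flippers

variable {E A : Type*} [Ring A]

open Classical in
noncomputable def correctionIndices [LinearOrder E] [Fintype E] (Xb : E → A) (e : E) : List E :=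
  (Finset.univ.filter fun f => f < e ∧ ¬Commute (Xb e) (Xb f)).toList

noncomputable def correctedFlipper [LinearOrder E] [Fintype E] (Zt Xb : E → A) (e : E) : A :=
  Xb e * ((correctionIndices Xb e).map Zt).prod

theorem nodup_correctionIndices [LinearOrder E] [Fintype E] (Xb : E → A) (e : E) :
    (correctionIndices Xb e).Nodup :=
  Finset.nodup_toList _

variable {Zt Xb : E → A}

theorem mem_correctionIndices [LinearOrder E] [Fintype E] {e f : E} :
    f ∈ correctionIndices Xb e ↔ f < e ∧ ¬Commute (Xb e) (Xb f) := by
  simp [correctionIndices]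

theorem flipper_mul_separator [DecidableEq E]
    (hXZ : ∀ e e', e ≠ e' → Xb e * Zt e' = Zt e' * Xb e)
    (hXZanti : ∀ e, Xb e * Zt e = -(Zt e * Xb e)) (e f : E) :
    Xb e * Zt f = (if f = e then -1 else 1 : ℤ) • (Zt f * Xb e) := by
  split_ifs with h
  · rw [h, hXZanti, neg_one_zsmul]
  · rw [hXZ e f (Ne.symm h), one_smul]

variable (hZcomm : ∀ e e', Zt e * Zt e' = Zt e' * Zt e)
include hZcomm

theorem commute_list_prod_map_separator (l : List E) (e : E) :
    Commute ((l.map Zt).prod) (Zt e) :=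
  Commute.list_prod_left _ _ fun _ hz => by
    obtain ⟨f, -, rfl⟩ := List.mem_map.mp hz
    exact hZcomm f e

theorem commute_list_prod_map_separators (l l' : List E) :
    Commute ((l.map Zt).prod) ((l'.map Zt).prod) :=
  Commute.list_prod_right _ _ fun _ hz => by
    obtain ⟨f, -, rfl⟩ := List.mem_map.mp hz
    exact commute_list_prod_map_separator hZcomm l f

variable [LinearOrder E] [Fintype E] (hXZ : ∀ e e', e ≠ e' → Xb e * Zt e' = Zt e' * Xb e)
  (hXZanti : ∀ e, Xb e * Zt e = -(Zt e * Xb e))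
include hXZ hXZanti

theorem correctedFlipper_mul_separator (e f : E) :
    correctedFlipper Zt Xb e * Zt f =
      (if f = e then -1 else 1 : ℤ) • (Zt f * correctedFlipper Zt Xb e) :=
  mul_mul_eq_zsmul_of_commute (flipper_mul_separator hXZ hXZanti e f)
    (commute_list_prod_map_separator hZcomm _ f)

theorem correctedFlipper_commute_of_lt
    (hXX : ∀ e e', Xb e * Xb e' = Xb e' * Xb e ∨ Xb e * Xb e' = -(Xb e' * Xb e)) {e f : E}
    (hef : e < f) : Commute (correctedFlipper Zt Xb e) (correctedFlipper Zt Xb f) := by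
  classical
  set s : ℤ := if Commute (Xb e) (Xb f) then 1 else -1
  have hs : s * s = 1 := by simp only [s]; split_ifs <;> norm_num
  have hXX' : Xb e * Xb f = s • (Xb f * Xb e) := by
    by_cases h : Commute (Xb e) (Xb f)
    · simp [s, h, h.eq]
    · simp [s, h, (hXX e f).resolve_left h]
  have hXP : Xb e * ((correctionIndices Xb f).map Zt).prod
      = s • (((correctionIndices Xb f).map Zt).prod * Xb e) := by
    rw [mul_list_prod_map_of_nodup _ _ e (nodup_correctionIndices Xb f)
      (flipper_mul_separator hXZ hXZanti e)]
    simp [s, mem_correctionIndices, hef, Commute.symm_iff]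
  have hPX : Commute (((correctionIndices Xb e).map Zt).prod) (Xb f) := by
    have := mul_list_prod_map_of_nodup (Xb f) Zt f (nodup_correctionIndices Xb e)
      (flipper_mul_separator hXZ hXZanti f)
    rw [if_neg fun h => (mem_correctionIndices.mp h).1.asymm hef, one_smul] at this
    exact this.symm
  exact commute_mul_mul_of_zsmul hs hXX' hXP hPX (commute_list_prod_map_separators hZcomm _ _)

end Flippers

theorem stmt11_general {E A : Type*} [Fintype E] [Ring A]
    (Zt Xb : E → A)
    (hZcomm : ∀ e e', Zt e * Zt e' = Zt e' * Zt e)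
    (hXZ : ∀ e e', e ≠ e' → Xb e * Zt e' = Zt e' * Xb e)
    (hXZanti : ∀ e, Xb e * Zt e = -(Zt e * Xb e))
    (hXX : ∀ e e', Xb e * Xb e' = Xb e' * Xb e ∨
      Xb e * Xb e' = -(Xb e' * Xb e)) :
    ∃ Xt : E → A,
      (∀ e, ∃ l : List E, Xt e = Xb e * (l.map Zt).prod) ∧
      (∀ e e', Xt e * Xt e' = Xt e' * Xt e) ∧
      (∀ e e', e ≠ e' → Xt e * Zt e' = Zt e' * Xt e) ∧
      (∀ e, Xt e * Zt e = -(Zt e * Xt e)) := by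
  let : LinearOrder E := LinearOrder.lift' _ (Fintype.equivFin E).injective
  refine ⟨correctedFlipper Zt Xb, fun e => ⟨_, rfl⟩, fun e f => ?_, fun e f hef => ?_,
    fun e => ?_⟩
  · rcases lt_trichotomy e f with h | rfl | h
    · exact correctedFlipper_commute_of_lt hZcomm hXZ hXZanti hXX h
    · rfl
    · exact (correctedFlipper_commute_of_lt hZcomm hXZ hXZanti hXX h).symm
  · simpa [Ne.symm hef] using correctedFlipper_mul_separator hZcomm hXZ hXZanti e f
  · simpa using correctedFlipper_mul_separator hZcomm hXZ hXZanti e e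

/-- Given pairwise-commuting involutive separators `Z̃_e` and involutive potential
flippers `X̄_e` with `X̄_e Z̃_{e'} = (-1)^{δ_{ee'}} Z̃_{e'} X̄_e`, where the potential
flippers pairwise commute or anticommute, the flippers can be corrected by
multiplying with products of separators so that the full Pauli algebra holds. -/
theorem stmt11 {E A : Type*} [Fintype E] [DecidableEq E] [Ring A] [Algebra ℂ A]
    (Zt Xb : E → A)
    (hZsq : ∀ e, Zt e * Zt e = 1)
    (hZcomm : ∀ e e', Zt e * Zt e' = Zt e' * Zt e)
    (hXsq : ∀ e, Xb e * Xb e = 1)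
    (hXZ : ∀ e e', e ≠ e' → Xb e * Zt e' = Zt e' * Xb e)
    (hXZanti : ∀ e, Xb e * Zt e = -(Zt e * Xb e))
    (hXX : ∀ e e', Xb e * Xb e' = Xb e' * Xb e ∨
      Xb e * Xb e' = -(Xb e' * Xb e)) :
    ∃ Xt : E → A,
      (∀ e, ∃ l : List E, Xt e = Xb e * (l.map Zt).prod) ∧
      (∀ e e', Xt e * Xt e' = Xt e' * Xt e) ∧
      (∀ e e', e ≠ e' → Xt e * Zt e' = Zt e' * Xt e) ∧
      (∀ e, Xt e * Zt e = -(Zt e * Xt e)) :=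
  stmt11_general Zt Xb hZcomm hXZ hXZanti hXX
end

section
/- For the Bravyi–Kitaev superfast encoding operators B̃_v = ∏_{e∋v} Z_{(v,e)} (product of Z over edges incident to v) and Ã_e (an X on edge e dressed with Z's on edges adjacent at its two endpoints with smaller label), the commutation relations match those of the fermionic operators: Ã_e and Ã_{e'} anticommute iff e ≠ e' share exactly one endpoint, and Ã_e anticommutes with B̃_v iff v is an endpoint of e; all B̃_v pairwise commute. -/
/-!
All operators involved are tensor products of single-qubit factors `1`, `X`, `Z`, and two such
strings commute or anticommute according to the parity of the number of qubits on which one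
carries `X` and the other `Z`. Two `B̃`'s have no such qubit. For `Ã_e` and `B̃_v` only the qubit
`e` can count, and it does iff `v` is an endpoint of `e`. For `Ã_e` and `Ã_{e'}` with `e < e'`
only the qubit `e` can count, and `Ã_{e'}` carries `Z` there iff the two edges share an
endpoint; in a simple graph two distinct edges share at most one.
-/

open Matrix

noncomputable section

def PX : Matrix (Fin 2) (Fin 2) ℂ := !![0, 1; 1, 0]
def PZ : Matrix (Fin 2) (Fin 2) ℂ := !![1, 0; 0, -1]

/-- The tensor product over all edges (qubits) of single-qubit operators. -/
def pauliString (E : Type*) [Fintype E] (P : E → Matrix (Fin 2) (Fin 2) ℂ) :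
    Matrix (E → Fin 2) (E → Fin 2) ℂ :=
  Matrix.of fun s t => ∏ e, P e (s e) (t e)

section PauliString

variable {ι : Type*} [Fintype ι]

theorem pauliString_mul [DecidableEq ι] (P Q : ι → Matrix (Fin 2) (Fin 2) ℂ) :
    pauliString ι P * pauliString ι Q = pauliString ι fun i => P i * Q i := by
  ext s t
  simp only [pauliString, mul_apply, of_apply, ← Finset.prod_mul_distrib]
  rw [Finset.prod_univ_sum, Fintype.piFinset_univ]

theorem pauliString_smul (c : ι → ℂ) (P : ι → Matrix (Fin 2) (Fin 2) ℂ) :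
    pauliString ι (fun i => c i • P i) = (∏ i, c i) • pauliString ι P := by
  ext s t
  simp only [pauliString, of_apply, Matrix.smul_apply, smul_eq_mul, Finset.prod_mul_distrib]

theorem pauliString_one : pauliString ι (fun _ => 1) = 1 := by
  ext s t
  simp only [pauliString, of_apply, one_apply, Finset.prod_boole, Finset.mem_univ, true_imp_iff,
    funext_iff]

end PauliString

theorem Finset.card_inter_eq_one_iff_nonempty {α : Type*} [DecidableEq α] {s t : Finset α}
    (hs : s.card = 2) (ht : t.card = 2) (hst : s ≠ t) :
    (s ∩ t).card = 1 ↔ (s ∩ t).Nonempty := by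
  have hle : (s ∩ t).card ≤ 2 := hs ▸ card_le_card inter_subset_left
  have hne : (s ∩ t).card ≠ 2 := fun h2 => hst <| by
    have hs' : s ∩ t = s := eq_of_subset_of_card_le inter_subset_left (by omega)
    have ht' : s ∩ t = t := eq_of_subset_of_card_le inter_subset_right (by omega)
    rw [← hs', ht']
  rw [← card_pos]
  omega

inductive Pauli
  | I
  | X
  | Z

namespace Pauli

def toMatrix : Pauli → Matrix (Fin 2) (Fin 2) ℂ
  | I => 1
  | X => PX
  | Z => PZ

def commSign : Pauli → Pauli → ℤˣ
  | X, Z => -1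
  | Z, X => -1
  | _, _ => 1

theorem commSign_self (a : Pauli) : commSign a a = 1 := by
  cases a <;> rfl

theorem commSign_I_left (b : Pauli) : commSign I b = 1 := by
  cases b <;> rfl

theorem commSign_eq_one_of_ne_X {a b : Pauli} (ha : a ≠ X) (hb : b ≠ X) : commSign a b = 1 := by
  cases a <;> cases b <;> first | rfl | contradiction

theorem toMatrix_mul_self (a : Pauli) : a.toMatrix * a.toMatrix = 1 := by
  cases a <;> ext i j <;> fin_cases i <;> fin_cases j <;> simp [toMatrix, PX, PZ]

theorem toMatrix_mul_comm (a b : Pauli) :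
    b.toMatrix * a.toMatrix = commSign a b • (a.toMatrix * b.toMatrix) := by
  cases a <;> cases b <;> ext i j <;> fin_cases i <;> fin_cases j <;>
    simp [toMatrix, commSign, PX, PZ, Units.smul_def]

variable {ι : Type*} [Fintype ι] [DecidableEq ι]

def string (p : ι → Pauli) : Matrix (ι → Fin 2) (ι → Fin 2) ℂ :=
  pauliString ι fun i => (p i).toMatrix

theorem string_mul_self (p : ι → Pauli) : string p * string p = 1 := by
  simp only [string, pauliString_mul, toMatrix_mul_self, pauliString_one]

theorem string_mul_comm (p q : ι → Pauli) :
    string q * string p = (∏ i, commSign (p i) (q i)) • (string p * string q) := by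
  simp only [string, pauliString_mul, toMatrix_mul_comm (p _), Units.smul_def, Units.coe_prod,
    ← Int.cast_smul_eq_zsmul ℂ, pauliString_smul, Int.cast_prod]

theorem string_anticommute_iff (p q : ι → Pauli) :
    string p * string q = -(string q * string p) ↔ ∏ i, commSign (p i) (q i) = -1 := by
  have hunit : (string p * string q) * (string q * string p) = 1 := by
    rw [mul_assoc, ← mul_assoc (string q), string_mul_self, one_mul, string_mul_self]
  rw [string_mul_comm p q]
  rcases Int.units_eq_one_or (∏ i, commSign (p i) (q i)) with h | h <;> rw [h]
  · have hne : string p * string q ≠ 0 := fun h0 => by simp [h0] at hunit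
    have := IsAddTorsionFree.of_module_rat (M := Matrix (ι → Fin 2) (ι → Fin 2) ℂ)
    simp only [one_smul, self_eq_neg, hne, false_iff]
    decide
  · simp [Units.neg_smul]

theorem string_commute_of_prod_commSign_eq_one {p q : ι → Pauli}
    (h : ∏ i, commSign (p i) (q i) = 1) : string p * string q = string q * string p := by
  rw [string_mul_comm p q, h, one_smul]

theorem string_commute_of_not_anticommute {p q : ι → Pauli}
    (h : ¬ string p * string q = -(string q * string p)) :
    string p * string q = string q * string p := by
  rw [string_anticommute_iff] at h
  exact string_commute_of_prod_commSign_eq_one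
    ((Int.units_eq_one_or _).resolve_right h)

theorem string_not_anticommute_self (p : ι → Pauli) :
    ¬ string p * string p = -(string p * string p) := by
  simp [string_anticommute_iff, commSign_self]

end Pauli

variable {V E : Type*} [Fintype V] [DecidableEq V] [Fintype E] [DecidableEq E]
  [LinearOrder E]

/-- Whether edge `e` is incident to vertex `v`, given endpoint maps `L`, `R`. -/
def incident (L R : E → V) (e : E) (v : V) : Prop := L e = v ∨ R e = v

instance (L R : E → V) (e : E) (v : V) : Decidable (incident L R e v) := by
  unfold incident; infer_instance

/-- The BKSF vertex operator `B̃_v`: product of `Z` over edges incident to `v`. -/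
def Bop (L R : E → V) (v : V) : Matrix (E → Fin 2) (E → Fin 2) ℂ :=
  pauliString E fun e => if incident L R e v then PZ else 1

/-- The BKSF edge operator `Ã_e`: `X` on `e` dressed by `Z` on the
smaller-labelled edges incident to either endpoint of `e`. -/
def Aop (L R : E → V) (e : E) : Matrix (E → Fin 2) (E → Fin 2) ℂ :=
  pauliString E fun e' =>
    if e' = e then PX
    else if (incident L R e' (L e) ∨ incident L R e' (R e)) ∧ e' < e then PZ
    else 1

end

section BKSF

variable {V E : Type*} [DecidableEq V] (L R : E → V)

theorem incident_or_incident_iff_nonempty (e' e : E) :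
    incident L R e' (L e) ∨ incident L R e' (R e) ↔
      (({L e', R e'} : Finset V) ∩ {L e, R e}).Nonempty := by
  simp only [incident, Finset.Nonempty, Finset.mem_inter, Finset.mem_insert,
    Finset.mem_singleton]
  aesop

theorem card_inter_endpoints_eq_one_iff_nonempty (hLR : ∀ e, L e ≠ R e)
    (hsimple : ∀ e e', e ≠ e' → ({L e, R e} : Finset V) ≠ {L e', R e'}) {e e' : E}
    (hne : e ≠ e') :
    (({L e, R e} : Finset V) ∩ {L e', R e'}).card = 1 ↔
      (({L e, R e} : Finset V) ∩ {L e', R e'}).Nonempty :=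
  Finset.card_inter_eq_one_iff_nonempty (Finset.card_pair (hLR e)) (Finset.card_pair (hLR e'))
    (hsimple e e' hne)

def vertexPauli (v : V) (e : E) : Pauli :=
  if incident L R e v then .Z else .I

theorem vertexPauli_ne_X (v : V) (e : E) : vertexPauli L R v e ≠ .X := by
  unfold vertexPauli
  split_ifs <;> simp

theorem Bop_eq_string [Fintype E] (v : V) : Bop L R v = Pauli.string (vertexPauli L R v) := by
  unfold Bop Pauli.string vertexPauli
  congr! 2 with e'
  split_ifs <;> rfl

theorem Bop_commute [Fintype E] [DecidableEq E] (v v' : V) :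
    Bop L R v * Bop L R v' = Bop L R v' * Bop L R v := by
  rw [Bop_eq_string, Bop_eq_string]
  exact Pauli.string_commute_of_prod_commSign_eq_one <| Finset.prod_eq_one fun x _ =>
    Pauli.commSign_eq_one_of_ne_X (vertexPauli_ne_X L R v x) (vertexPauli_ne_X L R v' x)

variable [DecidableEq E] [LinearOrder E]

def edgePauli (e e' : E) : Pauli :=
  if e' = e then .X
  else if (incident L R e' (L e) ∨ incident L R e' (R e)) ∧ e' < e then .Z
  else .I

theorem edgePauli_self (e : E) : edgePauli L R e e = .X := if_pos rfl

theorem edgePauli_ne_X {e e' : E} (h : e' ≠ e) : edgePauli L R e e' ≠ .X := by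
  unfold edgePauli
  split_ifs <;> simp_all

theorem edgePauli_of_lt {e e' : E} (h : e < e') : edgePauli L R e e' = .I := by
  rw [edgePauli, if_neg h.ne', if_neg (fun h' => h'.2.not_gt h)]

theorem edgePauli_of_gt {e e' : E} (h : e' < e) :
    edgePauli L R e e' =
      if (({L e', R e'} : Finset V) ∩ {L e, R e}).Nonempty then .Z else .I := by
  simp only [edgePauli, if_neg h.ne, h, and_true, incident_or_incident_iff_nonempty]

variable [Fintype E]

theorem prod_commSign_edgePauli_of_lt {e e' : E} (h : e < e') :
    ∏ x, Pauli.commSign (edgePauli L R e x) (edgePauli L R e' x) =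
      if (({L e, R e} : Finset V) ∩ {L e', R e'}).Nonempty then -1 else 1 := by
  rw [Finset.prod_eq_single e, edgePauli_self, edgePauli_of_gt L R h]
  · split_ifs <;> rfl
  · intro x _ hxe
    rcases eq_or_ne x e' with rfl | hxe'
    · rw [edgePauli_of_lt L R h, Pauli.commSign_I_left]
    · exact Pauli.commSign_eq_one_of_ne_X (edgePauli_ne_X L R hxe) (edgePauli_ne_X L R hxe')
  · simp

theorem prod_commSign_edgePauli_vertexPauli (e : E) (v : V) :
    ∏ x, Pauli.commSign (edgePauli L R e x) (vertexPauli L R v x) =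
      if incident L R e v then -1 else 1 := by
  rw [Finset.prod_eq_single e, edgePauli_self, vertexPauli]
  · split_ifs <;> rfl
  · exact fun x _ hxe =>
      Pauli.commSign_eq_one_of_ne_X (edgePauli_ne_X L R hxe) (vertexPauli_ne_X L R v x)
  · simp

theorem Aop_eq_string (e : E) : Aop L R e = Pauli.string (edgePauli L R e) := by
  unfold Aop Pauli.string edgePauli
  congr! 2 with e'
  split_ifs <;> rfl

theorem Aop_anticommute_iff_of_lt {e e' : E} (h : e < e') :
    Aop L R e * Aop L R e' = -(Aop L R e' * Aop L R e) ↔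
      (({L e, R e} : Finset V) ∩ {L e', R e'}).Nonempty := by
  rw [Aop_eq_string, Aop_eq_string, Pauli.string_anticommute_iff,
    prod_commSign_edgePauli_of_lt L R h]
  split_ifs <;> simp [*]

theorem Aop_anticommute_iff_of_ne {e e' : E} (h : e ≠ e') :
    Aop L R e * Aop L R e' = -(Aop L R e' * Aop L R e) ↔
      (({L e, R e} : Finset V) ∩ {L e', R e'}).Nonempty := by
  rcases h.lt_or_gt with h | h
  · exact Aop_anticommute_iff_of_lt L R h
  · rw [← neg_eq_iff_eq_neg, eq_comm, Finset.inter_comm]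
    exact Aop_anticommute_iff_of_lt L R h

theorem Aop_not_anticommute_self (e : E) : ¬ Aop L R e * Aop L R e = -(Aop L R e * Aop L R e) := by
  rw [Aop_eq_string]
  exact Pauli.string_not_anticommute_self _

theorem Aop_commute_of_not_anticommute {e e' : E}
    (h : ¬ Aop L R e * Aop L R e' = -(Aop L R e' * Aop L R e)) :
    Aop L R e * Aop L R e' = Aop L R e' * Aop L R e := by
  simp only [Aop_eq_string] at h ⊢
  exact Pauli.string_commute_of_not_anticommute h

theorem Aop_Bop_anticommute_iff (e : E) (v : V) :
    Aop L R e * Bop L R v = -(Bop L R v * Aop L R e) ↔ incident L R e v := by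
  rw [Aop_eq_string, Bop_eq_string, Pauli.string_anticommute_iff,
    prod_commSign_edgePauli_vertexPauli]
  split_ifs <;> simp [*]

end BKSF

noncomputable section

variable {V E : Type*} [Fintype V] [DecidableEq V] [Fintype E] [DecidableEq E]
  [LinearOrder E]

/-- BKSF commutation relations: the `Ã_e` anticommute iff the edges share exactly
one endpoint, `Ã_e` anticommutes with `B̃_v` iff `v` is an endpoint of `e`, and
the `B̃_v` pairwise commute. -/
theorem stmt12 (L R : E → V) (hLR : ∀ e, L e ≠ R e)
    (hsimple : ∀ e e', e ≠ e' → ({L e, R e} : Finset V) ≠ {L e', R e'}) :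
    (∀ e e', Aop L R e * Aop L R e' = -(Aop L R e' * Aop L R e) ↔
      e ≠ e' ∧ (({L e, R e} : Finset V) ∩ {L e', R e'}).card = 1) ∧
    (∀ e e', ¬(e ≠ e' ∧ (({L e, R e} : Finset V) ∩ {L e', R e'}).card = 1) →
      Aop L R e * Aop L R e' = Aop L R e' * Aop L R e) ∧
    (∀ e v, Aop L R e * Bop L R v = -(Bop L R v * Aop L R e) ↔
      L e = v ∨ R e = v) ∧
    (∀ v v', Bop L R v * Bop L R v' = Bop L R v' * Bop L R v) := by
  have hAA : ∀ e e', Aop L R e * Aop L R e' = -(Aop L R e' * Aop L R e) ↔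
      e ≠ e' ∧ (({L e, R e} : Finset V) ∩ {L e', R e'}).card = 1 := by
    intro e e'
    rcases eq_or_ne e e' with rfl | hne
    · simpa using Aop_not_anticommute_self L R e
    · rw [Aop_anticommute_iff_of_ne L R hne,
        card_inter_endpoints_eq_one_iff_nonempty L R hLR hsimple hne]
      simp [hne]
  exact ⟨hAA, fun e e' h => Aop_commute_of_not_anticommute L R ((hAA e e').not.mpr h),
    Aop_Bop_anticommute_iff L R, Bop_commute L R⟩

end
end
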